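/- A functional dependency X → Y holds in a table T (i.e., any two tuples agreeing on all attributes in X also agree on all attributes in Y) if and only if the implication X → Y holds in the formal context whose objects are unordered pairs of tuples of T, whose attributes are the attributes of T, and where a pair {t_i, t_j} is incident to attribute a iff t_i(a) = t_j(a). -/
import Mathlib


/-- FD X → Y holds in table T iff the implication X → Y holds in the
formal context whose objects are unordered pairs of tuples of T, whose attributes
are the attributes, with a pair incident to attribute `a` iff its two tuples agree on `a`. -/
theorem fd_iff_implication_in_pair_context
    {A V : Type*} (T : Set (A → V)) (X Y : Set A) :
    (∀ t₁ ∈ T, ∀ t₂ ∈ T, (∀ a ∈ X, t₁ a = t₂ a) → (∀ a ∈ Y, t₁ a = t₂ a)) ↔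
    (∀ p : Sym2 T,
      (∀ a ∈ X, ∀ t₁ t₂ : T, p = s(t₁, t₂) → (t₁ : A → V) a = (t₂ : A → V) a) →
      (∀ a ∈ Y, ∀ t₁ t₂ : T, p = s(t₁, t₂) → (t₁ : A → V) a = (t₂ : A → V) a)) := by
  constructor
  · intro hFD p h a ha t₁ t₂ hp
    exact hFD t₁ t₁.2 t₂ t₂.2 (fun a' ha' => h a' ha' t₁ t₂ hp) a ha
  · intro hImp t₁ h₁ t₂ h₂ hX a ha
    have := hImp s(⟨t₁, h₁⟩, ⟨t₂, h₂⟩)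
      (by
        intro a' ha' u v huv
        rw [Sym2.eq_iff] at huv
        rcases huv with ⟨hu, hv⟩ | ⟨hu, hv⟩
        · rw [← hu, ← hv]; exact hX a' ha'
        · rw [← hv, ← hu]; exact (hX a' ha').symm)
      a ha ⟨t₁, h₁⟩ ⟨t₂, h₂⟩ rfl
    exact this
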